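/- (Surrogate minorization for the G2DQPCA objective) Let F₁,…,F_ℓ be m×n matrices over the real quaternions, let w, v ∈ ℍⁿ be quaternion vectors, and let s ≥ 1 be real. Then Σ_{i=1}^{ℓ} Σ_{a=1}^{m} |(Fᵢw)_a|^s ≥ s·Σ_{i=1}^{ℓ} Σ_{a=1}^{m} |(Fᵢv)_a|^{s−1}·Re(conj(sign((Fᵢv)_a))·(Fᵢw)_a) + (1−s)·Σ_{i=1}^{ℓ} Σ_{a=1}^{m} |(Fᵢv)_a|^s, where terms with (Fᵢv)_a = 0 contribute 0 to the middle sum, and equality holds when w = v. -/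

import Mathlib

/-!
Each summand is handled separately. Writing `q = (Fᵢv)ₐ` and `w' = (Fᵢw)ₐ`, Cauchy–Schwarz and
`‖sign q‖ ≤ 1` bound `Re(conj(sign q) w')` by `‖w'‖`, and `s y^(s-1) x + (1-s) y^s ≤ x^s` is the
tangent line of the convex function `x ↦ x^s` at `y`, i.e. Bernoulli's inequality. For `w = v`
the middle term is `‖q‖^(s-1) ‖q‖ = ‖q‖^s`, so the bound is tight.
-/

open scoped Classical

/-- The sign of a quaternion: `a/|a|` if `a ≠ 0`, and `0` if `a = 0`. -/
noncomputable def qsign (a : Quaternion ℝ) : Quaternion ℝ :=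
  if a = 0 then 0 else ‖a‖⁻¹ • a

open scoped Quaternion

theorem Real.tangent_le_rpow {x y s : ℝ} (hx : 0 ≤ x) (hy : 0 < y) (hs : 1 ≤ s) :
    s * (y ^ (s - 1) * x) + (1 - s) * y ^ s ≤ x ^ s := by
  have hbernoulli : 1 + s * (x / y - 1) ≤ (x / y) ^ s := by
    simpa using one_add_mul_self_le_rpow_one_add
      (by linarith [div_nonneg hx hy.le] : -1 ≤ x / y - 1) hs
  have hys : 0 < y ^ s := Real.rpow_pos_of_pos hy s
  calc s * (y ^ (s - 1) * x) + (1 - s) * y ^ s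
      = y ^ s * (1 + s * (x / y - 1)) := by
        rw [Real.rpow_sub hy, Real.rpow_one]
        field_simp
        ring
    _ ≤ y ^ s * (x / y) ^ s := mul_le_mul_of_nonneg_left hbernoulli hys.le
    _ = x ^ s := by rw [Real.div_rpow hx hy.le, mul_div_cancel₀ _ hys.ne']

theorem Quaternion.re_star_mul_le (p q : ℍ) : (star p * q).re ≤ ‖p‖ * ‖q‖ := by
  have h := real_inner_le_norm (star p * q) 1
  rwa [Quaternion.inner_def, star_one, mul_one, norm_one, mul_one, norm_mul,
    Quaternion.norm_star] at h

theorem norm_qsign_le (q : ℍ) : ‖qsign q‖ ≤ 1 := by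
  unfold qsign
  split_ifs with hq
  · simp
  · rw [norm_smul, norm_inv, norm_norm, inv_mul_cancel₀ (norm_ne_zero_iff.mpr hq)]

theorem star_qsign_mul_self (q : ℍ) : star (qsign q) * q = (‖q‖ : ℍ) := by
  unfold qsign
  split_ifs with hq
  · simp [hq]
  · rw [Quaternion.star_smul, smul_mul_assoc, Quaternion.star_mul_self,
      Quaternion.normSq_eq_norm_mul_self, ← Quaternion.coe_smul, smul_eq_mul,
      inv_mul_cancel_left₀ (norm_ne_zero_iff.mpr hq)]

theorem surrogate_le_rpow_norm (q w : ℍ) {s : ℝ} (hs : 1 ≤ s) :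
    s * (‖q‖ ^ (s - 1) * (star (qsign q) * w).re) + (1 - s) * ‖q‖ ^ s ≤ ‖w‖ ^ s := by
  rcases eq_or_ne q 0 with rfl | hq
  · simpa [qsign, Real.zero_rpow (by linarith : s ≠ 0)] using
      Real.rpow_nonneg (norm_nonneg w) s
  have hre : (star (qsign q) * w).re ≤ ‖w‖ :=
    (Quaternion.re_star_mul_le _ _).trans <| by
      simpa [Quaternion.norm_star] using
        mul_le_mul_of_nonneg_right (norm_qsign_le q) (norm_nonneg w)
  calc s * (‖q‖ ^ (s - 1) * (star (qsign q) * w).re) + (1 - s) * ‖q‖ ^ s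
      ≤ s * (‖q‖ ^ (s - 1) * ‖w‖) + (1 - s) * ‖q‖ ^ s := by
        gcongr
    _ ≤ ‖w‖ ^ s := Real.tangent_le_rpow (norm_nonneg w) (norm_pos_iff.mpr hq) hs

theorem rpow_sub_one_mul_re_star_qsign_mul_self (q : ℍ) {s : ℝ} (hs : s ≠ 0) :
    ‖q‖ ^ (s - 1) * (star (qsign q) * q).re = ‖q‖ ^ s := by
  rw [star_qsign_mul_self, Quaternion.re_coe, ← Real.rpow_add_one' (norm_nonneg q)
    (by rwa [sub_add_cancel]), sub_add_cancel]

/-- (Surrogate minorization for the G2DQPCA objective) For quaternion matrices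
`F₁,…,F_ℓ ∈ ℍ^{m×n}`, quaternion vectors `w, v ∈ ℍⁿ` and real `s ≥ 1`,
`Σᵢ Σₐ |(Fᵢw)ₐ|^s ≥ s·Σᵢ Σₐ |(Fᵢv)ₐ|^{s-1}·Re(conj(sign((Fᵢv)ₐ))·(Fᵢw)ₐ)
 + (1-s)·Σᵢ Σₐ |(Fᵢv)ₐ|^s`, with equality when `w = v`. -/
theorem stmt_11 (ℓ m n : ℕ) (F : Fin ℓ → Matrix (Fin m) (Fin n) (Quaternion ℝ))
    (w v : Fin n → Quaternion ℝ) (s : ℝ) (hs : 1 ≤ s) :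
    (s * ∑ i, ∑ a, ‖(F i).mulVec v a‖ ^ (s - 1) *
          (star (qsign ((F i).mulVec v a)) * (F i).mulVec w a).re
        + (1 - s) * ∑ i, ∑ a, ‖(F i).mulVec v a‖ ^ s
      ≤ ∑ i, ∑ a, ‖(F i).mulVec w a‖ ^ s) ∧
    (s * ∑ i, ∑ a, ‖(F i).mulVec v a‖ ^ (s - 1) *
          (star (qsign ((F i).mulVec v a)) * (F i).mulVec v a).re
        + (1 - s) * ∑ i, ∑ a, ‖(F i).mulVec v a‖ ^ s
      = ∑ i, ∑ a, ‖(F i).mulVec v a‖ ^ s) := by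
  constructor
  · simp only [Finset.mul_sum, ← Finset.sum_add_distrib]
    exact Finset.sum_le_sum fun i _ => Finset.sum_le_sum fun a _ =>
      surrogate_le_rpow_norm _ _ hs
  · simp only [rpow_sub_one_mul_re_star_qsign_mul_self _ (by linarith : s ≠ 0)]
    ring
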